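/- arXiv:1511.04035 — 3 statements merged into one kernel-verified Lean document; each statement's English description precedes it below -/
import Mathlib

section
/- Let L ≥ 2 be even and let A = {1, L}. Then for every n ∈ ℕ, W_A(n) = II if and only if n mod (L+1) ∈ {0, 2, 4, …, L−2} (i.e., n mod (L+1) is even and at most L−2). -/
/-- Standard NIM winner for the one-pile subtraction game with move set `A`:
`nimW A n = true` means Player I (the player to move) wins with `n` stones;
`nimW A n = false` means Player II wins.  (For `A` consisting of positive
integers this is exactly: Player I wins iff some `a ∈ A` with `a ≤ n` moves to
a Player-II-win position `n - a`.) -/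
def nimW (A : Finset ℕ) : ℕ → Bool
  | n =>
    decide (((A.filter fun a => 0 < a ∧ a ≤ n).attach.filter (fun a =>
      nimW A (n - a.1) = false)).Nonempty)
decreasing_by
  all_goals
    have h := a.2
    simp only [Finset.mem_filter] at h
    omega

lemma nimW_true_iff (A : Finset ℕ) (n : ℕ) :
    nimW A n = true ↔ ∃ a ∈ A, 0 < a ∧ a ≤ n ∧ nimW A (n - a) = false := by
  rw [nimW]
  simp [Finset.Nonempty, Finset.mem_filter, and_assoc]

lemma nimW_false_iff (A : Finset ℕ) (n : ℕ) :
    nimW A n = false ↔ ∀ a ∈ A, 0 < a → a ≤ n → nimW A (n - a) = true := by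
  rw [← Bool.not_eq_true, nimW_true_iff]
  push_neg
  simp [Bool.not_eq_false]

/-- For even `L ≥ 2` and `A = {1, L}`,
Player II wins standard NIM with `n` stones iff
`n mod (L+1) ∈ {0, 2, 4, …, L-2}`, i.e. `n mod (L+1)` is even and at most `L-2`. -/
theorem nim_one_L_winCondition (L : ℕ) (hL : 2 ≤ L) (hLeven : Even L) (n : ℕ) :
    nimW ({1, L} : Finset ℕ) n = false ↔
      Even (n % (L + 1)) ∧ n % (L + 1) ≤ L - 2 := by
  induction n using Nat.strong_induction_on with
  | _ n ih =>
  rw [Nat.even_iff] at hLeven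
  set k := L + 1 with hk
  have hkpos : 0 < k := by omega
  have key : ∀ b a : ℕ, a < k → (k * b + a) % k = a := by
    intro b a ha
    rw [Nat.mul_add_mod, Nat.mod_eq_of_lt ha]
  obtain ⟨q, r, hrk, hn, hrdef⟩ : ∃ q r, r < k ∧ k * q + r = n ∧ n % k = r :=
    ⟨n / k, n % k, Nat.mod_lt _ hkpos, Nat.div_add_mod n k, rfl⟩
  rw [hrdef]
  by_cases hP : r % 2 = 0 ∧ r ≤ L - 2
  · -- losing position
    have : nimW ({1, L} : Finset ℕ) n = false := by
      rw [nimW_false_iff]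
      intro a ha hapos hale
      simp only [Finset.mem_insert, Finset.mem_singleton] at ha
      rcases ha with rfl | ha2
      · -- move 1
        by_cases hr0 : r = 0
        · -- n = k*q, q ≥ 1, (n-1) % k = L
          have hq1 : 1 ≤ q := by
            rcases Nat.eq_zero_or_pos q with rfl | h
            · omega
            · exact h
          obtain ⟨q', rfl⟩ : ∃ q', q = q' + 1 := ⟨q - 1, by omega⟩
          have hmul : k * (q' + 1) = k * q' + k := by ring
          have hsub : n - 1 = k * q' + L := by omega
          have hmod : (n - 1) % k = L := by rw [hsub, key q' L (by omega)]
          have hih := ih (n - 1) (by omega)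
          rw [Nat.even_iff] at hih
          rw [hmod] at hih
          cases hb : nimW ({1, L} : Finset ℕ) (n - 1)
          · exact absurd (hih.mp hb) (by omega)
          · rfl
        · -- r ≥ 1, (n-1) % k = r - 1
          have hsub : n - 1 = k * q + (r - 1) := by omega
          have hmod : (n - 1) % k = r - 1 := by rw [hsub, key q (r - 1) (by omega)]
          have hih := ih (n - 1) (by omega)
          rw [Nat.even_iff] at hih
          rw [hmod] at hih
          cases hb : nimW ({1, L} : Finset ℕ) (n - 1)
          · exact absurd (hih.mp hb) (by omega)
          · rfl
      · -- move L; r ≤ L - 2 so q ≥ 1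
        subst a
        have hq1 : 1 ≤ q := by
          rcases Nat.eq_zero_or_pos q with rfl | h
          · omega
          · exact h
        obtain ⟨q', rfl⟩ : ∃ q', q = q' + 1 := ⟨q - 1, by omega⟩
        have hmul : k * (q' + 1) = k * q' + k := by ring
        have hsub : n - L = k * q' + (r + 1) := by omega
        have hmod : (n - L) % k = r + 1 := by rw [hsub, key q' (r + 1) (by omega)]
        have hih := ih (n - L) (by omega)
        rw [Nat.even_iff, hmod] at hih
        cases hb : nimW ({1, L} : Finset ℕ) (n - L)
        · exact absurd (hih.mp hb) (by omega)
        · rfl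
    rw [this, Nat.even_iff]
    exact iff_of_true rfl (by omega)
  · -- winning position: r odd, or r = L
    have hwin : nimW ({1, L} : Finset ℕ) n = true := by
      rw [nimW_true_iff]
      by_cases hodd : r % 2 = 1
      · -- take 1
        refine ⟨1, by simp, one_pos, by omega, ?_⟩
        have hsub : n - 1 = k * q + (r - 1) := by omega
        have hmod : (n - 1) % k = r - 1 := by rw [hsub, key q (r - 1) (by omega)]
        rw [ih (n - 1) (by omega), Nat.even_iff, hmod]
        omega
      · -- r even, r > L - 2, so r = L
        have hrL : r = L := by omega
        refine ⟨L, by simp, by omega, by omega, ?_⟩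
        have hsub : n - L = k * q + 0 := by omega
        have hmod : (n - L) % k = 0 := by rw [hsub, key q 0 (by omega)]
        rw [ih (n - L) (by omega), Nat.even_iff, hmod]
        omega
    rw [Nat.even_iff]
    exact iff_of_false (by simp [hwin]) hP
end

section
/- Let L ≥ 3 be odd and let A = {1, L, L+1}. Then for every n ∈ ℕ, W_A(n) = II if and only if n mod (2L+1) ∈ {0, 2, 4, …, L−1}. -/
/-! The residues `0, 2, …, L - 1` modulo `2L + 1` form a closed set of P-positions. From such a
residue `r`, the move `1` leads to an odd residue or (from `0`) to `2L`, while `L` and `L + 1`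
wrap around to `r + L + 1` and `r + L`, both above `L - 1`. From any other residue one of the
three moves lands in the set, because `L` is odd: odd `r ≤ L` moves by `1`, odd `r > L` by `L`,
and even `r ≥ L + 1` by `L + 1`. -/

lemma nimW_eq_true_iff {A : Finset ℕ} (hA : ∀ a ∈ A, 0 < a) (n : ℕ) :
    nimW A n = true ↔ ∃ a ∈ A, a ≤ n ∧ nimW A (n - a) = false := by
  rw [nimW, decide_eq_true_iff]
  simp only [Finset.Nonempty, Finset.mem_filter, Finset.mem_attach, true_and, Subtype.exists,
    exists_prop]
  exact ⟨fun ⟨a, ⟨ha, _, han⟩, hlose⟩ => ⟨a, ha, han, hlose⟩,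
    fun ⟨a, ha, han, hlose⟩ => ⟨a, ⟨ha, hA a ha, han⟩, hlose⟩⟩

/-- `P` is the set of P-positions (second-player wins) of the subtraction game with moves `A`. -/
structure IsPPositions (A : Finset ℕ) (P : ℕ → Prop) : Prop where
  not_move_to : ∀ n, P n → ∀ a ∈ A, a ≤ n → ¬ P (n - a)
  exists_move_to : ∀ n, ¬ P n → ∃ a ∈ A, a ≤ n ∧ P (n - a)

theorem IsPPositions.nimW_eq_false_iff {A : Finset ℕ} {P : ℕ → Prop} (hA : ∀ a ∈ A, 0 < a)
    (hP : IsPPositions A P) (n : ℕ) : nimW A n = false ↔ P n := by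
  induction n using Nat.strong_induction_on with
  | _ n ih =>
    rw [← Bool.not_eq_true, nimW_eq_true_iff hA, not_iff_comm]
    constructor
    · intro hn
      obtain ⟨a, ha, han, hPa⟩ := hP.exists_move_to n hn
      exact ⟨a, ha, han, (ih _ (by have := hA a ha; omega)).mpr hPa⟩
    · rintro ⟨a, ha, han, hlose⟩
      exact fun hn => hP.not_move_to n hn a ha han ((ih _ (by have := hA a ha; omega)).mp hlose)

lemma Nat.sub_mod_of_mod_lt {n a m : ℕ} (h : n % m < a) (ham : a ≤ m) (han : a ≤ n) :
    (n - a) % m = n % m + (m - a) := by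
  have hmn : m ≤ n := by
    by_contra! hnm
    rw [Nat.mod_eq_of_lt hnm] at h
    omega
  have hwrap : (n - m) % m = n % m := (Nat.mod_eq_sub_mod hmn).symm
  have hrest : (m - a) % m = m - a := Nat.mod_eq_of_lt (by omega)
  rw [show n - a = (n - m) + (m - a) by omega, Nat.add_mod_of_add_mod_lt] <;> rw [hwrap, hrest]
  omega

lemma Nat.sub_mod_cases {n a m : ℕ} (ham : a ≤ m) (han : a ≤ n) :
    a ≤ n % m ∧ (n - a) % m = n % m - a ∨ n % m < a ∧ (n - a) % m = n % m + (m - a) := by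
  rcases le_or_gt a (n % m) with h | h
  · exact .inl ⟨h, (Nat.mod_sub_of_le h).symm⟩
  · exact .inr ⟨h, Nat.sub_mod_of_mod_lt h ham han⟩

theorem isPPositions_one_self_succ {L : ℕ} (hL : Odd L) :
    IsPPositions {1, L, L + 1} fun n => Even (n % (2 * L + 1)) ∧ n % (2 * L + 1) ≤ L - 1 where
  not_move_to n hn a ha han hna := by
    simp only [Finset.mem_insert, Finset.mem_singleton] at ha
    have hcases := Nat.sub_mod_cases (show a ≤ 2 * L + 1 by omega) han
    simp only [Nat.even_iff] at hn hna
    have := Nat.odd_iff.mp hL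
    generalize n % (2 * L + 1) = r at *
    omega
  exists_move_to n hn := by
    simp only [Nat.even_iff] at hn ⊢
    have := Nat.odd_iff.mp hL
    have hr : n % (2 * L + 1) < 2 * L + 1 := Nat.mod_lt _ (by omega)
    have hrn : n % (2 * L + 1) ≤ n := Nat.mod_le _ _
    obtain ⟨a, ha, har⟩ : ∃ a ∈ ({1, L, L + 1} : Finset ℕ), a ≤ n % (2 * L + 1) ∧
        (n % (2 * L + 1) - a) % 2 = 0 ∧ n % (2 * L + 1) - a ≤ L - 1 := by
      simp only [Finset.mem_insert, Finset.mem_singleton, exists_eq_or_imp, exists_eq_left]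
      omega
    refine ⟨a, ha, har.1.trans hrn, ?_⟩
    rw [← Nat.mod_sub_of_le har.1]
    exact har.2

theorem nim_one_L_Lsucc_odd_winCondition_general (L : ℕ) (hLodd : Odd L)
    (n : ℕ) :
    nimW ({1, L, L + 1} : Finset ℕ) n = false ↔
      Even (n % (2 * L + 1)) ∧ n % (2 * L + 1) ≤ L - 1 := by
  have hpos : ∀ a ∈ ({1, L, L + 1} : Finset ℕ), 0 < a := by
    have := hLodd.pos
    intro a ha
    simp only [Finset.mem_insert, Finset.mem_singleton] at ha
    omega
  exact (isPPositions_one_self_succ hLodd).nimW_eq_false_iff hpos n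

/-- For odd `L ≥ 3` and `A = {1, L, L+1}`,
Player II wins standard NIM with `n` stones iff
`n mod (2L+1) ∈ {0, 2, 4, …, L-1}`. -/
theorem nim_one_L_Lsucc_odd_winCondition (L : ℕ) (hL : 3 ≤ L) (hLodd : Odd L)
    (n : ℕ) :
    nimW ({1, L, L + 1} : Finset ℕ) n = false ↔
      Even (n % (2 * L + 1)) ∧ n % (2 * L + 1) ≤ L - 1 :=
  nim_one_L_Lsucc_odd_winCondition_general L hLodd n
end

section
/- Let A be a finite nonempty set of positive integers with a1 = min A. For all n, d, e ∈ ℕ: (1) if d ≥ gI(n) and e < gII(n), then W_A^$(n;d,e) = I; (2) if d < gI(n) and e ≥ gII(n), then W_A^$(n;d,e) = II. -/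
/-- NIM-with-cash winner: `nimWC A n d e = true` means the player to move,
having `d` dollars while the opponent has `e` dollars, wins with `n` stones
on the board.  The player to move wins iff there is `a ∈ A` with `a ≤ n`
and `a ≤ d` such that the resulting position `(n - a; e, d - a)` is a loss
for the (new) player to move. -/
def nimWC (A : Finset ℕ) : ℕ → ℕ → ℕ → Bool
  | n, d, e =>
    decide (((A.filter fun a => 0 < a ∧ a ≤ n ∧ a ≤ d).attach.filter (fun a =>
      nimWC A (n - a.1) e (d - a.1) = false)).Nonempty)
decreasing_by
  all_goals
    have h := a.2
    simp only [Finset.mem_filter] at h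
    omega

/-- `gI a1 n = (n - i)/2 + min (i+1) a1` where `i = n mod 2*a1`:
the poorness threshold for the player to move. -/
def gI (a1 n : ℕ) : ℕ := (n - n % (2 * a1)) / 2 + min (n % (2 * a1) + 1) a1

/-- `gII a1 n = (n - i)/2 + max 0 (i - a1 + 1)` where `i = n mod 2*a1`
(the `max` with `0` is realized by truncated subtraction `(i + 1) - a1`):
the poorness threshold for the player not moving. -/
def gII (a1 n : ℕ) : ℕ := (n - n % (2 * a1)) / 2 + (n % (2 * a1) + 1 - a1)

lemma nimWC_iff (A : Finset ℕ) (n d e : ℕ) :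
    nimWC A n d e = true ↔
      ∃ a ∈ A, 0 < a ∧ a ≤ n ∧ a ≤ d ∧ nimWC A (n - a) e (d - a) = false := by
  rw [nimWC]
  simp only [decide_eq_true_eq, Finset.filter_nonempty_iff, Finset.mem_attach, true_and,
    Subtype.exists, Finset.mem_filter]
  constructor
  · rintro ⟨a, ⟨haA, h0, hn, hd⟩, hw⟩
    exact ⟨a, haA, h0, hn, hd, hw⟩
  · rintro ⟨a, haA, h0, hn, hd, hw⟩
    exact ⟨a, ⟨haA, h0, hn, hd⟩, hw⟩

lemma nimWC_eq_false_iff (A : Finset ℕ) (n d e : ℕ) :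
    nimWC A n d e = false ↔
      ∀ a ∈ A, 0 < a → a ≤ n → a ≤ d → nimWC A (n - a) e (d - a) = true := by
  rw [← Bool.not_eq_true, nimWC_iff]
  push_neg
  constructor
  · intro h a haA h0 hn hd
    have := h a haA h0 hn hd
    simpa using this
  · intro h a haA h0 hn hd
    simpa using h a haA h0 hn hd

lemma decomp2 (a1 : ℕ) (h : 0 < a1) (n : ℕ) :
    ∃ m i, i < 2 * a1 ∧ n = 2 * a1 * m + i :=
  ⟨n / (2 * a1), n % (2 * a1), Nat.mod_lt _ (by omega), (Nat.div_add_mod n (2 * a1)).symm⟩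

lemma gI_eq (a1 m i : ℕ) (hi : i < 2 * a1) :
    gI a1 (2 * a1 * m + i) = a1 * m + min (i + 1) a1 := by
  unfold gI
  have h1 : (2 * a1 * m + i) % (2 * a1) = i := by
    rw [Nat.mul_add_mod, Nat.mod_eq_of_lt hi]
  have h2 : 2 * a1 * m = 2 * (a1 * m) := by ring
  rw [h1]
  omega

lemma gII_eq (a1 m i : ℕ) (hi : i < 2 * a1) :
    gII a1 (2 * a1 * m + i) = a1 * m + (i + 1 - a1) := by
  unfold gII
  have h1 : (2 * a1 * m + i) % (2 * a1) = i := by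
    rw [Nat.mul_add_mod, Nat.mod_eq_of_lt hi]
  have h2 : 2 * a1 * m = 2 * (a1 * m) := by ring
  rw [h1]
  omega

lemma g_sum (a1 : ℕ) (h : 0 < a1) (n : ℕ) : gI a1 n + gII a1 n = n + 1 := by
  obtain ⟨m, i, hi, rfl⟩ := decomp2 a1 h n
  have h2 : 2 * a1 * m = 2 * (a1 * m) := by ring
  rw [gI_eq a1 m i hi, gII_eq a1 m i hi]
  omega

lemma gII_small (a1 : ℕ) (h : 0 < a1) (n : ℕ) (hn : n < a1) : gII a1 n = 0 := by
  have h1 : n % (2 * a1) = n := Nat.mod_eq_of_lt (by omega)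
  unfold gII
  rw [h1]
  omega

lemma g_shift (a1 : ℕ) (h : 0 < a1) (n : ℕ) (hn : a1 ≤ n) :
    gI a1 n = gII a1 (n - a1) + a1 := by
  obtain ⟨m, i, hi, rfl⟩ := decomp2 a1 h n
  rcases le_or_gt a1 i with hcase | hcase
  · have he : 2 * a1 * m + i - a1 = 2 * a1 * m + (i - a1) := by omega
    have h2 : 2 * a1 * m = 2 * (a1 * m) := by ring
    rw [he, gI_eq a1 m i hi, gII_eq a1 m (i - a1) (by omega)]
    omega
  · have hm : 0 < m := by
      rcases Nat.eq_zero_or_pos m with rfl | h'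
      · simp at hn; omega
      · exact h'
    obtain ⟨m', rfl⟩ : ∃ m', m = m' + 1 := ⟨m - 1, by omega⟩
    have hmul : 2 * a1 * (m' + 1) = 2 * a1 * m' + 2 * a1 := by ring
    have he : 2 * a1 * (m' + 1) + i - a1 = 2 * a1 * m' + (i + a1) := by omega
    have h2 : a1 * (m' + 1) = a1 * m' + a1 := by ring
    rw [he, gI_eq a1 (m' + 1) i hi, gII_eq a1 m' (i + a1) (by omega)]
    omega

lemma gII_step (a1 : ℕ) (h : 0 < a1) (n : ℕ) : gII a1 (n + 1) ≤ gII a1 n + 1 := by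
  obtain ⟨m, i, hi, rfl⟩ := decomp2 a1 h n
  rcases lt_or_eq_of_le (Nat.succ_le_of_lt hi) with hcase | hcase
  · have he : 2 * a1 * m + i + 1 = 2 * a1 * m + (i + 1) := by omega
    rw [he, gII_eq a1 m (i + 1) hcase, gII_eq a1 m i hi]
    omega
  · have hmul : 2 * a1 * (m + 1) = 2 * a1 * m + 2 * a1 := by ring
    have he : 2 * a1 * m + i + 1 = 2 * a1 * (m + 1) + 0 := by omega
    have h2 : a1 * (m + 1) = a1 * m + a1 := by ring
    rw [he, gII_eq a1 (m + 1) 0 (by omega), gII_eq a1 m i hi]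
    omega

lemma gII_lip (a1 : ℕ) (h : 0 < a1) (n k : ℕ) : gII a1 (n + k) ≤ gII a1 n + k := by
  induction k with
  | zero => simp
  | succ k ih =>
    calc gII a1 (n + (k + 1)) = gII a1 ((n + k) + 1) := by ring_nf
    _ ≤ gII a1 (n + k) + 1 := gII_step a1 h _
    _ ≤ gII a1 n + k + 1 := by omega

/-- With `a1 = min A`:
(1) if `d ≥ gI n` and `e < gII n`, the player to move wins NIM with cash;
(2) if `d < gI n` and `e ≥ gII n`, the opponent wins. -/
theorem nimWC_poor_cases (A : Finset ℕ) (hA : A.Nonempty) (hpos : ∀ a ∈ A, 0 < a)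
    (a1 : ℕ) (ha1 : a1 = A.min' hA) (n d e : ℕ) :
    (gI a1 n ≤ d → e < gII a1 n → nimWC A n d e = true) ∧
      (d < gI a1 n → gII a1 n ≤ e → nimWC A n d e = false) := by
  have ha1A : a1 ∈ A := ha1 ▸ A.min'_mem hA
  have ha1pos : 0 < a1 := hpos _ ha1A
  have ha1min : ∀ a ∈ A, a1 ≤ a := fun a ha => ha1 ▸ A.min'_le a ha
  induction n using Nat.strong_induction_on generalizing d e with
  | _ n IH =>
  constructor
  · intro hd he
    have hn : a1 ≤ n := by
      by_contra hcon
      rw [gII_small a1 ha1pos n (by omega)] at he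
      omega
    have hs := g_shift a1 ha1pos n hn
    have hda : a1 ≤ d := by omega
    rw [nimWC_iff]
    refine ⟨a1, ha1A, ha1pos, hn, hda, ?_⟩
    have hsum1 := g_sum a1 ha1pos n
    have hsum2 := g_sum a1 ha1pos (n - a1)
    exact (IH (n - a1) (by omega) e (d - a1)).2 (by omega) (by omega)
  · intro hd he
    rw [nimWC_eq_false_iff]
    intro a haA h0 han had
    have haa1 : a1 ≤ a := ha1min a haA
    have hn : a1 ≤ n := le_trans haa1 han
    have hs := g_shift a1 ha1pos n hn
    have hkey : gI a1 n ≤ gII a1 (n - a) + a := by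
      have hrw : n - a1 = (n - a) + (a - a1) := by omega
      have hl := gII_lip a1 ha1pos (n - a) (a - a1)
      rw [hrw] at hs
      omega
    have hsum1 := g_sum a1 ha1pos n
    have hsum2 := g_sum a1 ha1pos (n - a)
    exact (IH (n - a) (by omega) e (d - a)).1 (by omega) (by omega)
end
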